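/- In $BS(2,2) = \langle a, t \mid t a^2 t^{-1} = a^2 \rangle$, the subgroup generated by $a^2$ and $t^2$ is free abelian of rank $2$ (isomorphic to $\mathbb{Z}^2$). -/
import Mathlib


/-- The relator set for `BS(2,2) = ⟨a, t ∣ t a² t⁻¹ = a²⟩`, with `a` indexed by `0`
and `t` indexed by `1`. -/
def bsRel22 : Set (FreeGroup (Fin 2)) :=
  {FreeGroup.of 1 * FreeGroup.of 0 ^ 2 * (FreeGroup.of 1)⁻¹ * (FreeGroup.of 0 ^ 2)⁻¹}

namespace BS22Aux

abbrev G := PresentedGroup bsRel22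

noncomputable def a : G := PresentedGroup.of 0
noncomputable def t : G := PresentedGroup.of 1

lemma rel : t * a ^ 2 * t⁻¹ * (a ^ 2)⁻¹ = 1 := by
  have h : (QuotientGroup.mk (FreeGroup.of 1 * FreeGroup.of 0 ^ 2 * (FreeGroup.of 1)⁻¹ *
      (FreeGroup.of 0 ^ 2)⁻¹ : FreeGroup (Fin 2)) : G) = 1 :=
    (QuotientGroup.eq_one_iff _).mpr
      (Subgroup.subset_normalClosure (by simp [bsRel22]))
  calc t * a ^ 2 * t⁻¹ * (a ^ 2)⁻¹
      = (QuotientGroup.mk (FreeGroup.of 1 * FreeGroup.of 0 ^ 2 * (FreeGroup.of 1)⁻¹ *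
          (FreeGroup.of 0 ^ 2)⁻¹ : FreeGroup (Fin 2)) : G) := by
        rfl
    _ = 1 := h

lemma comm_at : Commute (a ^ 2) t := by
  have h : t * a ^ 2 = a ^ 2 * t := by
    have h1 := rel
    rw [mul_inv_eq_one] at h1
    rw [mul_inv_eq_iff_eq_mul] at h1
    exact h1
  exact h.symm

lemma comm : Commute (a ^ 2) (t ^ 2) := comm_at.pow_right 2

noncomputable def ψ : Multiplicative (ℤ × ℤ) →* G where
  toFun x := (a ^ 2) ^ (x.toAdd.1) * (t ^ 2) ^ (x.toAdd.2)
  map_one' := by simp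
  map_mul' x y := by
    simp only [toAdd_mul, Prod.fst_add, Prod.snd_add, zpow_add]
    exact (comm.zpow_zpow _ _).mul_mul_mul_comm _ _

noncomputable def φ : G →* Multiplicative (ℤ × ℤ) :=
  PresentedGroup.toGroup (f := fun i : Fin 2 =>
    if i = 0 then Multiplicative.ofAdd ((1 : ℤ), (0 : ℤ))
    else Multiplicative.ofAdd ((0 : ℤ), (1 : ℤ)))
  (by
    intro r hr
    simp only [bsRel22, Set.mem_singleton_iff] at hr
    subst hr
    simp [mul_comm])

lemma φa : φ a = Multiplicative.ofAdd ((1 : ℤ), (0 : ℤ)) := by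
  simp [φ, a, PresentedGroup.toGroup.of]

lemma φt : φ t = Multiplicative.ofAdd ((0 : ℤ), (1 : ℤ)) := by
  simp [φ, t, PresentedGroup.toGroup.of]

lemma ψ_inj : Function.Injective ψ := by
  have key : ∀ x : Multiplicative (ℤ × ℤ), φ (ψ x) =
      Multiplicative.ofAdd ((2 * x.toAdd.1 : ℤ), (2 * x.toAdd.2 : ℤ)) := by
    intro x
    simp only [ψ, MonoidHom.coe_mk, OneHom.coe_mk, map_mul, map_zpow, map_pow, φa, φt]
    rw [← ofAdd_nsmul, ← ofAdd_nsmul, ← ofAdd_zsmul, ← ofAdd_zsmul, ← ofAdd_add]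
    congr 1
    simp [Prod.ext_iff]
    constructor <;> ring
  intro x y hxy
  have h2 := congrArg φ hxy
  rw [key, key] at h2
  have h3 := Multiplicative.ofAdd.injective h2
  have h4 : x.toAdd = y.toAdd := by
    have h1 := congrArg Prod.fst h3
    have h2' := congrArg Prod.snd h3
    simp at h1 h2'
    exact Prod.ext h1 h2'
  exact Multiplicative.toAdd.injective h4

lemma ψ_range : ψ.range = Subgroup.closure ({a ^ 2, t ^ 2} : Set G) := by
  apply le_antisymm
  · rintro _ ⟨x, rfl⟩
    simp only [ψ, MonoidHom.coe_mk, OneHom.coe_mk]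
    refine mul_mem (zpow_mem ?_ _) (zpow_mem ?_ _)
    · exact Subgroup.subset_closure (Or.inl rfl)
    · exact Subgroup.subset_closure (Or.inr rfl)
  · rw [Subgroup.closure_le]
    rintro x (rfl | rfl)
    · refine ⟨Multiplicative.ofAdd ((1 : ℤ), (0 : ℤ)), ?_⟩
      simp [ψ]
    · refine ⟨Multiplicative.ofAdd ((0 : ℤ), (1 : ℤ)), ?_⟩
      simp [ψ]

end BS22Aux

/-- In `BS(2,2)`, the subgroup generated by `a²` and `t²` is free abelian of rank 2. -/
theorem bs22_closure_sq_sq_free_abelian :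
    Nonempty ((Subgroup.closure
        ({(PresentedGroup.of 0 : PresentedGroup bsRel22) ^ 2,
          (PresentedGroup.of 1 : PresentedGroup bsRel22) ^ 2} :
          Set (PresentedGroup bsRel22))) ≃* Multiplicative (ℤ × ℤ)) := by
  exact ⟨((MonoidHom.ofInjective BS22Aux.ψ_inj).trans
    (MulEquiv.subgroupCongr BS22Aux.ψ_range)).symm⟩
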